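/- Full simulation theorem (abstract form): for every register machine program P and every initial register assignment, if the register machine halts in n steps with final register values v, then the translated MPPC system, started from the corresponding initial metabolite state (I_1 = 1, all other flags 0, register metabolites equal to the initial register values), reaches after finitely many steps a state with HALT = 1 whose register metabolites equal v, and this state is a fixed point. -/

import Mathlib

/-- Register machine instructions over registers indexed by `Fin r`. -/
inductive Instr (r : ℕ) where
  | inc (i : Fin r)
  | dec (i : Fin r)
  | jnz (i : Fin r) (k : ℕ)
  | halt
deriving DecidableEq

/-- Small-step semantics of a register machine: configuration `(pc, R)`;
`none` when the machine is halted (HALT instruction or pc out of range). -/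
def rmStep {r : ℕ} (P : List (Instr r)) (c : ℕ × (Fin r → ℕ)) :
    Option (ℕ × (Fin r → ℕ)) :=
  match P[c.1]? with
  | none => none
  | some .halt => none
  | some (.inc i) => some (c.1 + 1, Function.update c.2 i (c.2 i + 1))
  | some (.dec i) => some (c.1 + 1, Function.update c.2 i (c.2 i - 1))
  | some (.jnz i k) => some (if c.2 i ≠ 0 then k else c.1 + 1, c.2)

/-- Run the register machine for `n` steps. -/
def rmIter {r : ℕ} (P : List (Instr r)) : ℕ → ℕ × (Fin r → ℕ) → Option (ℕ × (Fin r → ℕ))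
  | 0, c => some c
  | n + 1, c => (rmStep P c).bind (rmIter P n)

/-- State of the translated MP system: instruction-pointer flags `I`, virtual-comparison
flags `L`, the `halt` flag, and register metabolites `R`. -/
structure MPState (r : ℕ) where
  I : ℕ → ℕ
  L : ℕ → ℕ
  halt : ℕ
  R : Fin r → ℕ

/-- Flux consuming register metabolite `i` contributed by instruction `j`
(only `DEC` rules `R_i → ∅`, flux `I_j`, with positive control). -/
def decFlux {r : ℕ} (P : List (Instr r)) (s : MPState r) (j : ℕ) (i : Fin r) : ℕ :=
  match P[j]? with
  | some (.dec i') => if i' = i then (if s.R i < s.I j then 0 else s.I j) else 0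
  | _ => 0

/-- Flux producing register metabolite `i` contributed by instruction `j`
(only `INC` rules `∅ → R_i`, flux `I_j`). -/
def incFlux {r : ℕ} (P : List (Instr r)) (s : MPState r) (j : ℕ) (i : Fin r) : ℕ :=
  match P[j]? with
  | some (.inc i') => if i' = i then s.I j else 0
  | _ => 0

/-- Production into pointer flag `I_m` contributed by instruction `j`:
sequential rules `I_j → I_{j+1}` (flux `I_j`) for `INC`/`DEC`, and the `JNZ` rules
`∅ → I_{j+1}` (flux `I_j - R_i`, truncated) and `L_j → I_k` (flux `L_j - I_{j+1}`, truncated). -/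
def prodI {r : ℕ} (P : List (Instr r)) (s : MPState r) (j m : ℕ) : ℕ :=
  match P[j]? with
  | some (.inc _) => if j + 1 = m then s.I j else 0
  | some (.dec _) => if j + 1 = m then s.I j else 0
  | some (.jnz i k) =>
      (if j + 1 = m then s.I j - s.R i else 0) + (if k = m then s.L j - s.I (j + 1) else 0)
  | _ => 0

/-- One parallel MP update step of the translated system (EMA with positive control). -/
def mpStep {r : ℕ} (P : List (Instr r)) (s : MPState r) : MPState r where
  I := fun m =>
    (if m < P.length then s.I m - s.I m else s.I m) +
      ∑ j ∈ Finset.range P.length, prodI P s j m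
  L := fun m =>
    match P[m]? with
    | some (.jnz _ _) => s.L m - ((s.L m - s.I (m + 1)) + s.I (m + 1)) + s.I m
    | _ => s.L m
  halt := s.halt + ∑ j ∈ Finset.range P.length,
    (if P[j]? = some .halt then s.I j else 0)
  R := fun i => s.R i + (∑ j ∈ Finset.range P.length, incFlux P s j i) -
    ∑ j ∈ Finset.range P.length, decFlux P s j i

/-- Initial metabolite state of the translated MP system: `I_0 = 1` (the first
instruction), all other flags `0`, register metabolites equal to the initial registers. -/
def mpInit {r : ℕ} (R0 : Fin r → ℕ) : MPState r where
  I := fun m => if m = 0 then 1 else 0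
  L := fun _ => 0
  halt := 0
  R := R0

/-!
A configuration `(pc, R)` is encoded by the state whose only nonzero flag is `I_pc = 1`, with
register metabolites `R`. In such a state only the rules of instruction `pc` carry flux, so one
MP step executes an `INC`, `DEC` or `HALT` exactly. A `JNZ` takes two steps: on a positive
register the pointer passes through `L_pc` and then on to `I_k`; on a zero register `I_{pc+1}` is
set at once, and the residual `L_pc = 1` is cleared during the next step, which otherwise
coincides with the step from the encoding of `(pc + 1, R)`. So each machine step `c → c'` is
matched by `f^[m] (f (ofConfig c)) = f (ofConfig c')` for the MP map `f`, and the halted state,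
having no active flag, is a fixed point.
-/

attribute [ext] MPState

namespace MPState

variable {r : ℕ}

def ofConfig (c : ℕ × (Fin r → ℕ)) : MPState r :=
  ⟨fun m => if m = c.1 then 1 else 0, fun _ => 0, 0, c.2⟩

/-- The state one MP step into a `JNZ` at `pc` whose register is positive. -/
def jnzJump (pc : ℕ) (R : Fin r → ℕ) : MPState r :=
  ⟨fun _ => 0, fun m => if m = pc then 1 else 0, 0, R⟩

/-- The state one MP step into a `JNZ` at `pc` whose register is zero: `I_{pc+1}` is already
set, and the copy left in `L_pc` is cleared by the next step. -/
def jnzSkip (pc : ℕ) (R : Fin r → ℕ) : MPState r :=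
  ⟨fun m => if m = pc + 1 then 1 else 0, fun m => if m = pc then 1 else 0, 0, R⟩

def halted (R : Fin r → ℕ) : MPState r :=
  ⟨fun _ => 0, fun _ => 0, 1, R⟩

def ActiveOnlyAt (s : MPState r) (pc : ℕ) : Prop :=
  ∀ j ≠ pc, s.I j = 0 ∧ s.L j = 0

end MPState

open MPState Finset

section Fluxes

variable {r : ℕ} (P : List (Instr r)) (s : MPState r)

lemma prodI_eq_zero {j : ℕ} (hI : s.I j = 0) (hL : s.L j = 0) (m : ℕ) : prodI P s j m = 0 := by
  unfold prodI
  split <;> simp [hI, hL]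

lemma incFlux_eq_zero {j : ℕ} (hI : s.I j = 0) (i : Fin r) : incFlux P s j i = 0 := by
  unfold incFlux
  split <;> simp [hI]

lemma decFlux_eq_zero {j : ℕ} (hI : s.I j = 0) (i : Fin r) : decFlux P s j i = 0 := by
  unfold decFlux
  split <;> simp [hI]

lemma prodI_congr {t : MPState r} {j : ℕ} (hI : s.I = t.I) (hL : s.L j = t.L j)
    (hR : s.R = t.R) (m : ℕ) : prodI P s j m = prodI P t j m := by
  unfold prodI
  rw [hI, hL, hR]

-- Truncated subtraction: `L_m` loses `(L_m - I_{m+1}) + I_{m+1} ≥ L_m`, then receives `I_m`.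
lemma mpStep_L_of_jnz {m : ℕ} {i : Fin r} {k : ℕ} (h : P[m]? = some (.jnz i k)) :
    (mpStep P s).L m = s.I m := by
  simp [mpStep, h, tsub_eq_zero_of_le le_tsub_add]

lemma mpStep_L_of_ne_jnz {m : ℕ} (h : ∀ i k, P[m]? ≠ some (.jnz i k)) :
    (mpStep P s).L m = s.L m := by
  dsimp only [mpStep]
  split
  · exact absurd ‹_› (h _ _)
  · rfl

lemma mpStep_L_eq_zero {m : ℕ} (hI : s.I m = 0) (hL : s.L m = 0) : (mpStep P s).L m = 0 := by
  simp only [mpStep]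
  split <;> simp [hI, hL]

lemma mpStep_eq_self_of_idle (hI : s.I = 0) (hL : s.L = 0) : mpStep P s = s := by
  ext m
  · simp [mpStep, hI, prodI_eq_zero P s (congrFun hI _) (congrFun hL _)]
  · exact mpStep_L_eq_zero P s (congrFun hI m) (congrFun hL m) |>.trans (congrFun hL m).symm
  · simp [mpStep, hI]
  · simp [mpStep, incFlux_eq_zero P s (congrFun hI _), decFlux_eq_zero P s (congrFun hI _)]

lemma mpStep_halted (R : Fin r → ℕ) : mpStep P (halted R) = halted R :=
  mpStep_eq_self_of_idle P _ rfl rfl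

end Fluxes

section Local

variable {r : ℕ} (P : List (Instr r)) {s : MPState r} {pc : ℕ}

lemma mpStep_I_of_activeOnlyAt (hpc : pc < P.length) (hs : s.ActiveOnlyAt pc) (m : ℕ) :
    (mpStep P s).I m = prodI P s pc m := by
  have hsum : ∑ j ∈ range P.length, prodI P s j m = prodI P s pc m :=
    sum_eq_single_of_mem pc (mem_range.2 hpc) fun j _ hj =>
      prodI_eq_zero P s (hs j hj).1 (hs j hj).2 m
  have hconsumed : (if m < P.length then s.I m - s.I m else s.I m) = 0 := by
    split_ifs with hm
    · exact Nat.sub_self _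
    · exact (hs m (by omega)).1
  simp only [mpStep, hsum, hconsumed, zero_add]

lemma mpStep_L_of_activeOnlyAt (hs : s.ActiveOnlyAt pc) {m : ℕ} (hm : m ≠ pc) :
    (mpStep P s).L m = 0 :=
  mpStep_L_eq_zero P s (hs m hm).1 (hs m hm).2

lemma mpStep_halt_of_activeOnlyAt (hpc : pc < P.length) (hs : s.ActiveOnlyAt pc) :
    (mpStep P s).halt = s.halt + if P[pc]? = some .halt then s.I pc else 0 := by
  simp only [mpStep]
  rw [sum_eq_single_of_mem pc (mem_range.2 hpc) fun j _ hj => by simp [(hs j hj).1]]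

lemma mpStep_R_of_activeOnlyAt (hpc : pc < P.length) (hs : s.ActiveOnlyAt pc) (i : Fin r) :
    (mpStep P s).R i = s.R i + incFlux P s pc i - decFlux P s pc i := by
  simp only [mpStep]
  rw [sum_eq_single_of_mem pc (mem_range.2 hpc) fun j _ hj => incFlux_eq_zero P s (hs j hj).1 i,
    sum_eq_single_of_mem pc (mem_range.2 hpc) fun j _ hj => decFlux_eq_zero P s (hs j hj).1 i]

lemma ofConfig_activeOnlyAt (c : ℕ × (Fin r → ℕ)) : (ofConfig c).ActiveOnlyAt c.1 :=
  fun _ hj => ⟨if_neg hj, rfl⟩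

lemma jnzJump_activeOnlyAt (R : Fin r → ℕ) : (jnzJump pc R).ActiveOnlyAt pc :=
  fun _ hj => ⟨rfl, if_neg hj⟩

end Local

section Steps

variable {r : ℕ} {P : List (Instr r)} {pc : ℕ} {R : Fin r → ℕ}

lemma lt_length_of_getElem?_eq_some {a : Instr r} (h : P[pc]? = some a) : pc < P.length :=
  (List.getElem?_eq_some_iff.mp h).1

lemma mpStep_ofConfig_inc {i : Fin r} (hg : P[pc]? = some (.inc i)) :
    mpStep P (ofConfig (pc, R)) = ofConfig (pc + 1, Function.update R i (R i + 1)) := by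
  have hpc := lt_length_of_getElem?_eq_some hg
  have hs := ofConfig_activeOnlyAt (pc, R)
  ext m
  · rw [mpStep_I_of_activeOnlyAt P hpc hs]
    simp [prodI, hg, ofConfig, eq_comm]
  · obtain rfl | hm := eq_or_ne m pc
    · exact mpStep_L_of_ne_jnz P _ (by simp [hg])
    · exact mpStep_L_of_activeOnlyAt P hs hm
  · rw [mpStep_halt_of_activeOnlyAt P hpc hs]
    simp [hg, ofConfig]
  · rw [mpStep_R_of_activeOnlyAt P hpc hs]
    obtain rfl | hi := eq_or_ne m i
    · simp [incFlux, decFlux, hg, ofConfig]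
    · simp [incFlux, decFlux, hg, ofConfig, hi, Ne.symm hi]

lemma mpStep_ofConfig_dec {i : Fin r} (hg : P[pc]? = some (.dec i)) :
    mpStep P (ofConfig (pc, R)) = ofConfig (pc + 1, Function.update R i (R i - 1)) := by
  have hpc := lt_length_of_getElem?_eq_some hg
  have hs := ofConfig_activeOnlyAt (pc, R)
  ext m
  · rw [mpStep_I_of_activeOnlyAt P hpc hs]
    simp [prodI, hg, ofConfig, eq_comm]
  · obtain rfl | hm := eq_or_ne m pc
    · exact mpStep_L_of_ne_jnz P _ (by simp [hg])
    · exact mpStep_L_of_activeOnlyAt P hs hm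
  · rw [mpStep_halt_of_activeOnlyAt P hpc hs]
    simp [hg, ofConfig]
  · rw [mpStep_R_of_activeOnlyAt P hpc hs]
    obtain rfl | hi := eq_or_ne m i
    · by_cases h0 : R m = 0 <;> simp [incFlux, decFlux, hg, ofConfig, h0]
    · simp [incFlux, decFlux, hg, ofConfig, hi, Ne.symm hi]

lemma mpStep_ofConfig_halt (hg : P[pc]? = some .halt) :
    mpStep P (ofConfig (pc, R)) = halted R := by
  have hpc := lt_length_of_getElem?_eq_some hg
  have hs := ofConfig_activeOnlyAt (pc, R)
  ext m
  · rw [mpStep_I_of_activeOnlyAt P hpc hs]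
    simp [prodI, hg, halted]
  · obtain rfl | hm := eq_or_ne m pc
    · exact mpStep_L_of_ne_jnz P _ (by simp [hg])
    · exact mpStep_L_of_activeOnlyAt P hs hm
  · rw [mpStep_halt_of_activeOnlyAt P hpc hs]
    simp [hg, ofConfig, halted]
  · rw [mpStep_R_of_activeOnlyAt P hpc hs]
    simp [incFlux, decFlux, hg, ofConfig, halted]

lemma mpStep_ofConfig_jnz_of_ne_zero {i : Fin r} {k : ℕ} (hg : P[pc]? = some (.jnz i k))
    (hR : R i ≠ 0) : mpStep P (ofConfig (pc, R)) = jnzJump pc R := by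
  have hpc := lt_length_of_getElem?_eq_some hg
  have hs := ofConfig_activeOnlyAt (pc, R)
  ext m
  · rw [mpStep_I_of_activeOnlyAt P hpc hs]
    simp [prodI, hg, ofConfig, jnzJump, Nat.sub_eq_zero_of_le (Nat.one_le_iff_ne_zero.mpr hR)]
  · obtain rfl | hm := eq_or_ne m pc
    · simp [mpStep_L_of_jnz P _ hg, ofConfig, jnzJump]
    · simp [mpStep_L_of_activeOnlyAt P hs hm, jnzJump, hm]
  · rw [mpStep_halt_of_activeOnlyAt P hpc hs]
    simp [hg, ofConfig, jnzJump]
  · rw [mpStep_R_of_activeOnlyAt P hpc hs]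
    simp [incFlux, decFlux, hg, ofConfig, jnzJump]

lemma mpStep_jnzJump {i : Fin r} {k : ℕ} (hg : P[pc]? = some (.jnz i k)) :
    mpStep P (jnzJump pc R) = ofConfig (k, R) := by
  have hpc := lt_length_of_getElem?_eq_some hg
  have hs := jnzJump_activeOnlyAt (pc := pc) R
  ext m
  · rw [mpStep_I_of_activeOnlyAt P hpc hs]
    simp [prodI, hg, ofConfig, jnzJump, eq_comm]
  · obtain rfl | hm := eq_or_ne m pc
    · simp [mpStep_L_of_jnz P _ hg, ofConfig, jnzJump]
    · simp [mpStep_L_of_activeOnlyAt P hs hm, ofConfig]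
  · rw [mpStep_halt_of_activeOnlyAt P hpc hs]
    simp [ofConfig, jnzJump]
  · rw [mpStep_R_of_activeOnlyAt P hpc hs]
    simp [incFlux, decFlux, hg, ofConfig, jnzJump]

lemma mpStep_ofConfig_jnz_of_eq_zero {i : Fin r} {k : ℕ} (hg : P[pc]? = some (.jnz i k))
    (hR : R i = 0) : mpStep P (ofConfig (pc, R)) = jnzSkip pc R := by
  have hpc := lt_length_of_getElem?_eq_some hg
  have hs := ofConfig_activeOnlyAt (pc, R)
  ext m
  · rw [mpStep_I_of_activeOnlyAt P hpc hs]
    simp [prodI, hg, ofConfig, jnzSkip, hR, eq_comm]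
  · obtain rfl | hm := eq_or_ne m pc
    · simp [mpStep_L_of_jnz P _ hg, ofConfig, jnzSkip]
    · simp [mpStep_L_of_activeOnlyAt P hs hm, jnzSkip, hm]
  · rw [mpStep_halt_of_activeOnlyAt P hpc hs]
    simp [hg, ofConfig, jnzSkip]
  · rw [mpStep_R_of_activeOnlyAt P hpc hs]
    simp [incFlux, decFlux, hg, ofConfig, jnzSkip]

lemma mpStep_jnzSkip {i : Fin r} {k : ℕ} (hg : P[pc]? = some (.jnz i k)) :
    mpStep P (jnzSkip pc R) = mpStep P (ofConfig (pc + 1, R)) := by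
  have hprod (j m : ℕ) : prodI P (jnzSkip pc R) j m = prodI P (ofConfig (pc + 1, R)) j m := by
    obtain rfl | hj := eq_or_ne j pc
    · simp [prodI, hg, jnzSkip, ofConfig]
    · exact prodI_congr P (jnzSkip pc R) (t := ofConfig (pc + 1, R)) rfl (if_neg hj) rfl m
  ext m
  · simp only [mpStep, hprod]
    rfl
  · obtain rfl | hm := eq_or_ne m pc
    · simp [mpStep_L_of_jnz P _ hg, jnzSkip, ofConfig]
    · simp [mpStep, jnzSkip, ofConfig, hm]
  · rfl
  · rfl

end Steps

section Simulation

variable {r : ℕ} {P : List (Instr r)}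

lemma exists_iterate_mpStep_of_rmStep {c c' : ℕ × (Fin r → ℕ)} (h : rmStep P c = some c') :
    ∃ m, (mpStep P)^[m] (mpStep P (ofConfig c)) = mpStep P (ofConfig c') := by
  obtain ⟨pc, R⟩ := c
  unfold rmStep at h
  cases hg : P[pc]? with
  | none => simp [hg] at h
  | some ins =>
    cases ins with
    | halt => simp [hg] at h
    | inc i =>
      obtain rfl := Option.some.inj (hg ▸ h)
      exact ⟨1, by rw [mpStep_ofConfig_inc hg]; rfl⟩
    | dec i =>
      obtain rfl := Option.some.inj (hg ▸ h)
      exact ⟨1, by rw [mpStep_ofConfig_dec hg]; rfl⟩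
    | jnz i k =>
      obtain rfl := Option.some.inj (hg ▸ h)
      by_cases hR : R i = 0
      · refine ⟨1, ?_⟩
        rw [if_neg (not_not.2 hR), mpStep_ofConfig_jnz_of_eq_zero hg hR]
        exact mpStep_jnzSkip hg
      · refine ⟨2, ?_⟩
        rw [if_pos hR, mpStep_ofConfig_jnz_of_ne_zero hg hR]
        exact congrArg (mpStep P) (mpStep_jnzJump hg)

lemma exists_iterate_mpStep_of_rmIter {n : ℕ} {c c' : ℕ × (Fin r → ℕ)}
    (h : rmIter P n c = some c') :
    ∃ m, (mpStep P)^[m] (mpStep P (ofConfig c)) = mpStep P (ofConfig c') := by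
  induction n generalizing c with
  | zero =>
    cases h
    exact ⟨0, rfl⟩
  | succ n ih =>
    obtain ⟨c₁, h₁, h₂⟩ := Option.bind_eq_some_iff.mp h
    obtain ⟨m₁, hm₁⟩ := exists_iterate_mpStep_of_rmStep h₁
    obtain ⟨m₂, hm₂⟩ := ih h₂
    exact ⟨m₂ + m₁, by rw [Function.iterate_add_apply, hm₁, hm₂]⟩

end Simulation

/-- Full simulation theorem: for every register machine program `P` and initial registers
`R0`, if the machine halts in `n` steps with final register values `v` (reaching a
configuration whose current instruction is `HALT`), then the translated MPPC system,
started from the corresponding initial metabolite state, reaches after finitely many MP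
steps a state with `halt = 1` whose register metabolites equal `v`, and that state is a
fixed point of the MP dynamics. -/
theorem full_simulation {r : ℕ} (P : List (Instr r)) (R0 : Fin r → ℕ) (n : ℕ)
    (pc : ℕ) (v : Fin r → ℕ)
    (hrun : rmIter P n (0, R0) = some (pc, v))
    (hhalt : P[pc]? = some .halt) :
    ∃ m : ℕ,
      ((mpStep P)^[m] (mpInit R0)).halt = 1 ∧
      ((mpStep P)^[m] (mpInit R0)).R = v ∧
      mpStep P ((mpStep P)^[m] (mpInit R0)) = (mpStep P)^[m] (mpInit R0) := by
  obtain ⟨m, hm⟩ := exists_iterate_mpStep_of_rmIter hrun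
  have hreach : (mpStep P)^[m + 1] (mpInit R0) = halted v := by
    rw [Function.iterate_succ_apply, ← mpStep_ofConfig_halt hhalt]
    exact hm
  refine ⟨m + 1, ?_, ?_, ?_⟩ <;> rw [hreach]
  · rfl
  · rfl
  · exact mpStep_halted P v
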